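/- arXiv:1705.10015 — 5 statements merged into one kernel-verified Lean document; each statement's English description precedes it below -/
import Mathlib

section
/- Let N ≥ 1, R ≥ 1, dimensions I_1,…,I_N ≥ 1, let Z and Δ be N-way tensors (functions from Π_{n=1}^N Fin(I_n) to ℝ) with Δ taking values in {0,1}, let λ > 0, and for each n let R_n be an I_n × I_n diagonal matrix with strictly positive diagonal entries. Then the infimum over all factor tuples A = (A^(1),…,A^(N)), A^(n) ∈ ℝ^{I_n × R} with columns a_r^(n), of f₁(A) := (1/2)·Σ_i Δ(i)·(Z(i) − Σ_{r=1}^R Π_{n=1}^N A^(n)(i_n,r))² + (λ/2)·Σ_{r=1}^R Σ_{n=1}^N (a_r^(n))ᵀ R_n^{-1} a_r^(n) equals the infimum over all tuples of unit vectors ũ_r^(n) ∈ ℝ^{I_n} (‖ũ_r^(n)‖₂ = 1) and nonnegative scalars γ̃_1,…,γ̃_R of f₂(Ũ,γ̃) := (1/2)·Σ_i Δ(i)·(Z(i) − Σ_{r=1}^R γ̃_r Π_{n=1}^N (R_n^{1/2} ũ_r^(n))(i_n))² + (λN/2)·Σ_{r=1}^R γ̃_r^{2/N}, where R_n^{1/2}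 is the diagonal matrix of entrywise square roots of R_n. -/
open Finset

/-- Each diagonal matrix `R_n` is represented by its diagonal `Rm n`. -/
noncomputable def f1 (N R : ℕ) (I : Fin N → ℕ)
    (Z Δ : (∀ n : Fin N, Fin (I n)) → ℝ) (lam : ℝ)
    (Rm : ∀ n : Fin N, Fin (I n) → ℝ)
    (A : ∀ n : Fin N, Fin (I n) → Fin R → ℝ) : ℝ :=
  (1 / 2) * ∑ i : (∀ n : Fin N, Fin (I n)),
      Δ i * (Z i - ∑ r : Fin R, ∏ n : Fin N, A n (i n) r) ^ 2
    + (lam / 2) * ∑ r : Fin R, ∑ n : Fin N, ∑ j : Fin (I n),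
      A n j r * (Rm n j)⁻¹ * A n j r

noncomputable def f2 (N R : ℕ) (I : Fin N → ℕ)
    (Z Δ : (∀ n : Fin N, Fin (I n)) → ℝ) (lam : ℝ)
    (Rm : ∀ n : Fin N, Fin (I n) → ℝ)
    (U : ∀ n : Fin N, Fin R → Fin (I n) → ℝ) (γ : Fin R → ℝ) : ℝ :=
  (1 / 2) * ∑ i : (∀ n : Fin N, Fin (I n)),
      Δ i * (Z i - ∑ r : Fin R, γ r * ∏ n : Fin N, Real.sqrt (Rm n (i n)) * U n r (i n)) ^ 2
    + (lam * N / 2) * ∑ r : Fin R, γ r ^ ((2 : ℝ) / N)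

/-!
For a factor tuple `A` and a point `(U, γ)` that produce the same model tensor, `f₁ A - f₂ U γ`
is `λ/2 · ∑ᵣ (∑ₙ ‖a_r^(n)‖²_{R_n⁻¹} - N γᵣ^{2/N})`. Spreading `γᵣ` evenly over the `N` modes,
`a_r^(n) = γᵣ^{1/N} R_n^{1/2} u_r^(n)`, makes this gap vanish. Conversely, writing each column as
`a_r^(n) = s_{rn} R_n^{1/2} u_r^(n)` with `s_{rn} = ‖a_r^(n)‖_{R_n⁻¹}` and `u_r^(n)` a unit vector,
and taking `γᵣ = ∏ₙ s_{rn}`, the gap is nonnegative by AM-GM. Hence every value of either objective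
is bounded below by a value of the other, and the infima agree.
-/

theorem Real.card_mul_prod_rpow_two_div_card_le_sum_sq {ι : Type*} [Fintype ι] (s : ι → ℝ)
    (hs : ∀ i, 0 ≤ s i) :
    (Fintype.card ι : ℝ) * (∏ i, s i) ^ ((2 : ℝ) / Fintype.card ι) ≤ ∑ i, s i ^ 2 := by
  rcases isEmpty_or_nonempty ι with hι | hι
  · simp
  have hcard : (0 : ℝ) < Fintype.card ι := by exact_mod_cast Fintype.card_pos
  have amgm := Real.geom_mean_le_arith_mean univ (fun _ => 1) (fun i => s i ^ 2)
    (fun _ _ => zero_le_one) (by simpa using hcard) (fun i _ => sq_nonneg (s i))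
  simp only [Real.rpow_one, sum_const, card_univ, nsmul_eq_mul, mul_one, one_mul,
    prod_pow] at amgm
  rwa [div_eq_mul_inv, Real.rpow_mul (prod_nonneg fun i _ => hs i), Real.rpow_two,
    ← le_div_iff₀' hcard]

theorem exists_sum_sq_eq_one_and_eq_mul_sqrt_mul {ι : Type*} [Fintype ι] [Nonempty ι]
    (w : ι → ℝ) (hw : ∀ j, 0 < w j) (a : ι → ℝ) :
    ∃ u : ι → ℝ, ∑ j, u j ^ 2 = 1 ∧
      ∀ j, a j = √(∑ k, a k ^ 2 / w k) * (√(w j) * u j) := by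
  classical
  set s := √(∑ k, a k ^ 2 / w k)
  have hs : s ^ 2 = ∑ k, a k ^ 2 / w k :=
    Real.sq_sqrt (sum_nonneg fun k _ => div_nonneg (sq_nonneg _) (hw k).le)
  by_cases hs0 : s = 0
  · have hsum : ∑ k, a k ^ 2 / w k = 0 := by simpa [hs0] using hs.symm
    have ha : ∀ j, a j = 0 := fun j => by
      simpa [(hw j).ne'] using (sum_eq_zero_iff_of_nonneg fun k _ =>
        div_nonneg (sq_nonneg (a k)) (hw k).le).mp hsum j (mem_univ j)
    obtain ⟨j₀⟩ := ‹Nonempty ι›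
    refine ⟨Pi.single j₀ 1, ?_, fun j => by simp [ha, hs0]⟩
    simp [sq, Pi.single_apply]
  · refine ⟨fun j => a j / (√(w j) * s), ?_, fun j => ?_⟩
    · simp_rw [div_pow, mul_pow, Real.sq_sqrt (hw _).le, ← div_div, ← sum_div, ← hs]
      exact div_self (pow_ne_zero 2 hs0)
    · have := Real.sqrt_pos.mpr (hw j)
      field_simp

section Objectives

variable {N R : ℕ} {I : Fin N → ℕ} {Z Δ : (∀ n : Fin N, Fin (I n)) → ℝ} {lam : ℝ}
  {Rm : ∀ n : Fin N, Fin (I n) → ℝ}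

theorem f1_eq_f2_add {A : ∀ n : Fin N, Fin (I n) → Fin R → ℝ}
    {U : ∀ n : Fin N, Fin R → Fin (I n) → ℝ} {γ : Fin R → ℝ}
    (hmodel : ∀ (i : ∀ n, Fin (I n)) r,
      ∏ n, A n (i n) r = γ r * ∏ n, √(Rm n (i n)) * U n r (i n)) :
    f1 N R I Z Δ lam Rm A = f2 N R I Z Δ lam Rm U γ + lam / 2 * ∑ r,
      (∑ n, ∑ j, A n j r * (Rm n j)⁻¹ * A n j r - N * γ r ^ ((2 : ℝ) / N)) := by
  simp only [f1, f2, hmodel, sum_sub_distrib, ← mul_sum]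
  ring

theorem f1_rpow_mul_eq_f2 (hN : N ≠ 0) (hRm : ∀ n j, 0 < Rm n j)
    (U : ∀ n : Fin N, Fin R → Fin (I n) → ℝ) (γ : Fin R → ℝ)
    (hU : ∀ n r, ∑ j, U n r j ^ 2 = 1) (hγ : ∀ r, 0 ≤ γ r) :
    f1 N R I Z Δ lam Rm (fun n j r => γ r ^ (N⁻¹ : ℝ) * (√(Rm n j) * U n r j)) =
      f2 N R I Z Δ lam Rm U γ := by
  have hmodel : ∀ (i : ∀ n, Fin (I n)) r,
      ∏ n, γ r ^ (N⁻¹ : ℝ) * (√(Rm n (i n)) * U n r (i n)) =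
        γ r * ∏ n, √(Rm n (i n)) * U n r (i n) := by
    intro i r
    rw [prod_mul_distrib, prod_const, card_univ, Fintype.card_fin,
      Real.rpow_inv_natCast_pow (hγ r) hN]
  have hpenalty : ∀ r n, ∑ j, γ r ^ (N⁻¹ : ℝ) * (√(Rm n j) * U n r j) * (Rm n j)⁻¹ *
      (γ r ^ (N⁻¹ : ℝ) * (√(Rm n j) * U n r j)) = γ r ^ ((2 : ℝ) / N) := by
    intro r n
    have hγ2 : (γ r ^ (N⁻¹ : ℝ)) ^ 2 = γ r ^ ((2 : ℝ) / N) := by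
      rw [← Real.rpow_natCast, ← Real.rpow_mul (hγ r), div_eq_inv_mul]
      norm_num
    calc _ = ∑ j, (γ r ^ (N⁻¹ : ℝ)) ^ 2 * U n r j ^ 2 := by
          refine sum_congr rfl fun j _ => ?_
          have := hRm n j
          field_simp
          rw [Real.sq_sqrt this.le]
          ring
      _ = _ := by rw [← mul_sum, hU, mul_one, hγ2]
  rw [f1_eq_f2_add hmodel]
  simp [hpenalty]

theorem exists_f2_le_f1 (hI : ∀ n, 1 ≤ I n) (hlam : 0 ≤ lam) (hRm : ∀ n j, 0 < Rm n j)
    (A : ∀ n : Fin N, Fin (I n) → Fin R → ℝ) :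
    ∃ (U : ∀ n : Fin N, Fin R → Fin (I n) → ℝ) (γ : Fin R → ℝ),
      (∀ n r, ∑ j, U n r j ^ 2 = 1) ∧ (∀ r, 0 ≤ γ r) ∧
      f2 N R I Z Δ lam Rm U γ ≤ f1 N R I Z Δ lam Rm A := by
  have (n : Fin N) : Nonempty (Fin (I n)) := ⟨⟨0, hI n⟩⟩
  set s : Fin N → Fin R → ℝ := fun n r => √(∑ j, A n j r ^ 2 / Rm n j)
  choose U hU hA using fun n r =>
    exists_sum_sq_eq_one_and_eq_mul_sqrt_mul (Rm n) (hRm n) (fun j => A n j r)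
  have hs : ∀ n r, 0 ≤ s n r := fun n r => Real.sqrt_nonneg _
  refine ⟨U, fun r => ∏ n, s n r, hU, fun r => prod_nonneg fun n _ => hs n r, ?_⟩
  have hmodel : ∀ (i : ∀ n, Fin (I n)) r,
      ∏ n, A n (i n) r = (∏ n, s n r) * ∏ n, √(Rm n (i n)) * U n r (i n) := by
    intro i r
    rw [← prod_mul_distrib]
    exact prod_congr rfl fun n _ => hA n r (i n)
  have hgap : ∀ r, (N : ℝ) * (∏ n, s n r) ^ ((2 : ℝ) / N) ≤
      ∑ n, ∑ j, A n j r * (Rm n j)⁻¹ * A n j r := by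
    intro r
    have hpenalty : ∀ n, ∑ j, A n j r * (Rm n j)⁻¹ * A n j r = s n r ^ 2 := by
      intro n
      rw [Real.sq_sqrt (sum_nonneg fun j _ => div_nonneg (sq_nonneg _) (hRm n j).le)]
      exact sum_congr rfl fun j _ => by ring
    simpa [hpenalty] using
      Real.card_mul_prod_rpow_two_div_card_le_sum_sq (fun n => s n r) (fun n => hs n r)
  rw [f1_eq_f2_add hmodel]
  exact le_add_of_nonneg_right <| mul_nonneg (by positivity) <|
    sum_nonneg fun r _ => sub_nonneg.mpr (hgap r)

end Objectives

theorem inf_f1_eq_inf_f2_general (N R : ℕ) (hN : 1 ≤ N)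
    (I : Fin N → ℕ) (hI : ∀ n, 1 ≤ I n)
    (Z Δ : (∀ n : Fin N, Fin (I n)) → ℝ)
    (lam : ℝ) (hlam : 0 < lam)
    (Rm : ∀ n : Fin N, Fin (I n) → ℝ)
    (hRm : ∀ n j, 0 < Rm n j) :
    sInf {y : ℝ | ∃ A : ∀ n : Fin N, Fin (I n) → Fin R → ℝ,
        y = f1 N R I Z Δ lam Rm A} =
    sInf {y : ℝ | ∃ (U : ∀ n : Fin N, Fin R → Fin (I n) → ℝ) (γ : Fin R → ℝ),
        (∀ n r, ∑ j : Fin (I n), U n r j ^ 2 = 1) ∧ (∀ r, 0 ≤ γ r) ∧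
        y = f2 N R I Z Δ lam Rm U γ} := by
  apply csInf_eq_csInf_of_forall_exists_le
  · rintro _ ⟨A, rfl⟩
    obtain ⟨U, γ, hU, hγ, hle⟩ := exists_f2_le_f1 hI hlam.le hRm A
    exact ⟨_, ⟨U, γ, hU, hγ, rfl⟩, hle⟩
  · rintro _ ⟨U, γ, hU, hγ, rfl⟩
    exact ⟨_, ⟨_, rfl⟩, (f1_rpow_mul_eq_f2 (Nat.one_le_iff_ne_zero.mp hN) hRm U γ hU hγ).le⟩

/-- Value-equality half of Proposition 1: the infima of problems (12) and (14) coincide. -/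
theorem inf_f1_eq_inf_f2 (N R : ℕ) (hN : 1 ≤ N) (hR : 1 ≤ R)
    (I : Fin N → ℕ) (hI : ∀ n, 1 ≤ I n)
    (Z Δ : (∀ n : Fin N, Fin (I n)) → ℝ)
    (hΔ : ∀ i, Δ i = 0 ∨ Δ i = 1)
    (lam : ℝ) (hlam : 0 < lam)
    (Rm : ∀ n : Fin N, Fin (I n) → ℝ)
    (hRm : ∀ n j, 0 < Rm n j) :
    sInf {y : ℝ | ∃ A : ∀ n : Fin N, Fin (I n) → Fin R → ℝ,
        y = f1 N R I Z Δ lam Rm A} =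
    sInf {y : ℝ | ∃ (U : ∀ n : Fin N, Fin R → Fin (I n) → ℝ) (γ : Fin R → ℝ),
        (∀ n r, ∑ j : Fin (I n), U n r j ^ 2 = 1) ∧ (∀ r, 0 ≤ γ r) ∧
        y = f2 N R I Z Δ lam Rm U γ} :=
  inf_f1_eq_inf_f2_general N R hN I hI Z Δ lam hlam Rm hRm
end

section
/- Let N ≥ 1, R ≥ 1, dimensions I_1,…,I_N ≥ 1, let Z and Δ be N-way tensors with Δ taking values in {0,1}, let λ > 0, and for each n let R_n be an I_n × I_n diagonal matrix with strictly positive diagonal entries. Define f₁ on factor tuples A and f₂ on pairs (Ũ, γ̃) of unit-vector tuples and nonnegative scalars as follows: f₁(A) := (1/2)·Σ_i Δ(i)·(Z(i) − Σ_{r=1}^R Π_{n=1}^N A^(n)(i_n,r))² + (λ/2)·Σ_{r,n} (a_r^(n))ᵀ R_n^{-1} a_r^(n), and f₂(Ũ,γ̃) := (1/2)·Σ_i Δ(i)·(Z(i) − Σ_{r=1}^R γ̃_r Π_{n=1}^N (R_n^{1/2} ũ_r^(n))(i_n))² + (λN/2)·Σ_r γ̃_r^{2/N}. If (Ũ, γ̃)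 is a global minimizer of f₂, then the factor tuple A defined by a_r^(n) := γ̃_r^{1/N} · R_n^{1/2} ũ_r^(n) for all r, n is a global minimizer of f₁, and f₁(A) = f₂(Ũ, γ̃). -/
open Finset

/-- Minimizer-correspondence half of Proposition 1: if `(Ũ, γ̃)` is a global minimizer of
`f₂` (over unit-vector tuples and nonnegative weights), then the factor tuple
`a_r^(n) = γ̃_r^(1/N) · R_n^(1/2) ũ_r^(n)` is a global minimizer of `f₁`, with equal values. -/
theorem minimizer_correspondence (N R : ℕ) (hN : 1 ≤ N) (hR : 1 ≤ R)
    (I : Fin N → ℕ) (hI : ∀ n, 1 ≤ I n)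
    (Z Δ : (∀ n : Fin N, Fin (I n)) → ℝ)
    (hΔ : ∀ i, Δ i = 0 ∨ Δ i = 1)
    (lam : ℝ) (hlam : 0 < lam)
    (Rm : ∀ n : Fin N, Fin (I n) → ℝ)
    (hRm : ∀ n j, 0 < Rm n j)
    (U : ∀ n : Fin N, Fin R → Fin (I n) → ℝ) (γ : Fin R → ℝ)
    (hU : ∀ n r, ∑ j : Fin (I n), U n r j ^ 2 = 1)
    (hγ : ∀ r, 0 ≤ γ r)
    (hmin : ∀ (U' : ∀ n : Fin N, Fin R → Fin (I n) → ℝ) (γ' : Fin R → ℝ),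
      (∀ n r, ∑ j : Fin (I n), U' n r j ^ 2 = 1) → (∀ r, 0 ≤ γ' r) →
      f2 N R I Z Δ lam Rm U γ ≤ f2 N R I Z Δ lam Rm U' γ')
    (A : ∀ n : Fin N, Fin (I n) → Fin R → ℝ)
    (hA : ∀ n j r, A n j r = γ r ^ ((1 : ℝ) / N) * (Real.sqrt (Rm n j) * U n r j)) :
    (∀ A' : ∀ n : Fin N, Fin (I n) → Fin R → ℝ,
        f1 N R I Z Δ lam Rm A ≤ f1 N R I Z Δ lam Rm A') ∧
    f1 N R I Z Δ lam Rm A = f2 N R I Z Δ lam Rm U γ := by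
  have hNne : (N : ℝ) ≠ 0 := Nat.cast_ne_zero.2 (by omega)
  have hsq : ∀ n j, (0:ℝ) < Real.sqrt (Rm n j) := fun n j => Real.sqrt_pos.2 (hRm n j)
  -- Equality part
  have key : ∀ (r : Fin R) (i : ∀ n : Fin N, Fin (I n)),
      ∏ n : Fin N, A n (i n) r = γ r * ∏ n : Fin N, Real.sqrt (Rm n (i n)) * U n r (i n) := by
    intro r i
    simp only [hA]
    rw [Finset.prod_mul_distrib, Finset.prod_const, Finset.card_univ, Fintype.card_fin]
    congr 1
    rw [← Real.rpow_natCast (γ r ^ ((1:ℝ)/N)) N, ← Real.rpow_mul (hγ r)]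
    rw [one_div, inv_mul_cancel₀ hNne, Real.rpow_one]
  have pen : ∀ (r : Fin R) (n : Fin N),
      ∑ j : Fin (I n), A n j r * (Rm n j)⁻¹ * A n j r = γ r ^ ((2:ℝ)/N) := by
    intro r n
    have h3 : ∀ j : Fin (I n),
        A n j r * (Rm n j)⁻¹ * A n j r = γ r ^ ((2:ℝ)/N) * U n r j ^ 2 := by
      intro j
      have h1 : Real.sqrt (Rm n j) * Real.sqrt (Rm n j) = Rm n j :=
        Real.mul_self_sqrt (hRm n j).le
      have h2 : γ r ^ ((1:ℝ)/N) * γ r ^ ((1:ℝ)/N) = γ r ^ ((2:ℝ)/N) := by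
        rw [← Real.rpow_add' (hγ r) (by positivity)]
        norm_num
        ring_nf
      rw [hA]
      rw [show γ r ^ ((1:ℝ)/N) * (Real.sqrt (Rm n j) * U n r j) * (Rm n j)⁻¹ *
          (γ r ^ ((1:ℝ)/N) * (Real.sqrt (Rm n j) * U n r j))
        = (γ r ^ ((1:ℝ)/N) * γ r ^ ((1:ℝ)/N)) *
          ((Real.sqrt (Rm n j) * Real.sqrt (Rm n j)) * (Rm n j)⁻¹) * U n r j ^ 2 by ring]
      rw [h1, mul_inv_cancel₀ (hRm n j).ne', h2, mul_one]
    rw [Finset.sum_congr rfl (fun j _ => h3 j), ← Finset.mul_sum, hU n r, mul_one]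
  have heq : f1 N R I Z Δ lam Rm A = f2 N R I Z Δ lam Rm U γ := by
    unfold f1 f2
    congr 1
    · congr 1
      refine Finset.sum_congr rfl (fun i _ => ?_)
      rw [Finset.sum_congr rfl (fun r _ => key r i)]
    · rw [Finset.sum_congr rfl (fun r _ =>
        Finset.sum_congr rfl (fun n (_ : n ∈ Finset.univ) => pen r n))]
      simp only [Finset.sum_const, Finset.card_univ, Fintype.card_fin, nsmul_eq_mul]
      rw [← Finset.mul_sum, ← mul_assoc]
      ring
  refine ⟨fun A' => ?_, heq⟩
  -- Minimality part
  set w : ∀ n : Fin N, Fin R → Fin (I n) → ℝ :=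
    fun n r j => A' n j r / Real.sqrt (Rm n j) with hw
  set β : ∀ _ : Fin N, Fin R → ℝ :=
    fun n r => Real.sqrt (∑ j : Fin (I n), w n r j ^ 2) with hβ
  have hβnn : ∀ n r, 0 ≤ β n r := fun n r => Real.sqrt_nonneg _
  have hβsq : ∀ n r, β n r ^ 2 = ∑ j : Fin (I n), w n r j ^ 2 := by
    intro n r
    exact Real.sq_sqrt (Finset.sum_nonneg (fun j _ => sq_nonneg _))
  set γ' : Fin R → ℝ := fun r => ∏ n : Fin N, β n r with hγ'def
  have hγ'nn : ∀ r, 0 ≤ γ' r := fun r => Finset.prod_nonneg (fun n _ => hβnn n r)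
  set U' : ∀ n : Fin N, Fin R → Fin (I n) → ℝ := fun n r =>
    if β n r = 0 then (fun j => if j = ⟨0, hI n⟩ then 1 else 0)
    else fun j => w n r j / β n r with hU'def
  have hU'unit : ∀ n r, ∑ j : Fin (I n), U' n r j ^ 2 = 1 := by
    intro n r
    by_cases h : β n r = 0
    · simp only [hU'def, if_pos h]
      rw [Finset.sum_congr rfl (fun j _ => show (if j = (⟨0, hI n⟩ : Fin (I n)) then (1:ℝ) else 0) ^ 2
          = if j = ⟨0, hI n⟩ then 1 else 0 by split <;> norm_num)]
      simp
    · simp only [hU'def, if_neg h, div_pow]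
      rw [← Finset.sum_div, ← hβsq n r, div_self (pow_ne_zero 2 h)]
  have hwk : ∀ n r j, β n r * U' n r j = w n r j := by
    intro n r j
    by_cases h : β n r = 0
    · have hS : ∑ j : Fin (I n), w n r j ^ 2 = 0 := by
        have := hβsq n r; rw [h] at this; linarith [this]
      have hw0 : w n r j = 0 := by
        have := (Finset.sum_eq_zero_iff_of_nonneg (fun j _ => sq_nonneg (w n r j))).1 hS j
          (Finset.mem_univ j)
        exact pow_eq_zero_iff (by norm_num) |>.1 this
      rw [h, hw0, zero_mul]
    · simp only [hU'def, if_neg h]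
      rw [mul_comm, div_mul_cancel₀ _ h]
  have hA'w : ∀ n (j : Fin (I n)) r, A' n j r = Real.sqrt (Rm n j) * w n r j := by
    intro n j r
    show A' n j r = Real.sqrt (Rm n j) * (A' n j r / Real.sqrt (Rm n j))
    rw [mul_div_assoc']
    exact (mul_div_cancel_left₀ _ (hsq n j).ne').symm
  have hfit : ∀ (r : Fin R) (i : ∀ n : Fin N, Fin (I n)),
      γ' r * ∏ n : Fin N, Real.sqrt (Rm n (i n)) * U' n r (i n)
        = ∏ n : Fin N, A' n (i n) r := by
    intro r i
    rw [hγ'def, ← Finset.prod_mul_distrib]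
    refine Finset.prod_congr rfl (fun n _ => ?_)
    rw [hA'w n (i n) r, ← hwk n r (i n)]
    ring
  have hpen' : ∀ (r : Fin R) (n : Fin N),
      ∑ j : Fin (I n), A' n j r * (Rm n j)⁻¹ * A' n j r = β n r ^ 2 := by
    intro r n
    rw [hβsq n r]
    refine Finset.sum_congr rfl (fun j _ => ?_)
    rw [hA'w n j r]
    have h1 : Real.sqrt (Rm n j) * Real.sqrt (Rm n j) = Rm n j :=
      Real.mul_self_sqrt (hRm n j).le
    rw [show Real.sqrt (Rm n j) * w n r j * (Rm n j)⁻¹ * (Real.sqrt (Rm n j) * w n r j)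
      = (Real.sqrt (Rm n j) * Real.sqrt (Rm n j)) * (Rm n j)⁻¹ * w n r j ^ 2 by ring]
    rw [h1, mul_inv_cancel₀ (hRm n j).ne', one_mul]
  have hamgm : ∀ r : Fin R, (N:ℝ) * γ' r ^ ((2:ℝ)/N) ≤ ∑ n : Fin N, β n r ^ 2 := by
    intro r
    have h1 : ∏ n : Fin N, (β n r ^ 2) ^ ((1:ℝ)/N) ≤ ∑ n : Fin N, (1/(N:ℝ)) * β n r ^ 2 :=
      Real.geom_mean_le_arith_mean_weighted Finset.univ _ _
        (fun n _ => by positivity)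
        (by rw [Finset.sum_const, Finset.card_univ, Fintype.card_fin, nsmul_eq_mul]
            field_simp)
        (fun n _ => sq_nonneg _)
    have h2 : ∀ n : Fin N, (β n r ^ 2) ^ ((1:ℝ)/N) = β n r ^ ((2:ℝ)/N) := by
      intro n
      rw [← Real.rpow_natCast (β n r) 2, ← Real.rpow_mul (hβnn n r)]
      norm_num [div_eq_mul_inv]
    have h3 : γ' r ^ ((2:ℝ)/N) = ∏ n : Fin N, β n r ^ ((2:ℝ)/N) := by
      rw [hγ'def]
      exact (Real.finset_prod_rpow Finset.univ _ (fun n _ => hβnn n r) _).symm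
    rw [h3, ← Finset.prod_congr rfl (fun n _ => h2 n)]
    calc (N:ℝ) * ∏ n : Fin N, (β n r ^ 2) ^ ((1:ℝ)/N)
        ≤ (N:ℝ) * ∑ n : Fin N, (1/(N:ℝ)) * β n r ^ 2 := by
          apply mul_le_mul_of_nonneg_left h1 (Nat.cast_nonneg N)
      _ = ∑ n : Fin N, β n r ^ 2 := by
          rw [← Finset.mul_sum, ← mul_assoc, mul_one_div, div_self hNne, one_mul]
  have hle : f2 N R I Z Δ lam Rm U' γ' ≤ f1 N R I Z Δ lam Rm A' := by
    unfold f1 f2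
    have hfiteq : ∑ i : (∀ n : Fin N, Fin (I n)),
        Δ i * (Z i - ∑ r : Fin R, γ' r * ∏ n : Fin N, Real.sqrt (Rm n (i n)) * U' n r (i n)) ^ 2
      = ∑ i : (∀ n : Fin N, Fin (I n)),
        Δ i * (Z i - ∑ r : Fin R, ∏ n : Fin N, A' n (i n) r) ^ 2 := by
      refine Finset.sum_congr rfl (fun i _ => ?_)
      rw [Finset.sum_congr rfl (fun r _ => hfit r i)]
    rw [hfiteq]
    have hpenle : (lam * N / 2) * ∑ r : Fin R, γ' r ^ ((2:ℝ)/N)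
        ≤ (lam / 2) * ∑ r : Fin R, ∑ n : Fin N, ∑ j : Fin (I n),
            A' n j r * (Rm n j)⁻¹ * A' n j r := by
      rw [Finset.sum_congr rfl (fun r _ =>
        Finset.sum_congr rfl (fun n (_ : n ∈ Finset.univ) => hpen' r n))]
      rw [show (lam * N / 2) * ∑ r : Fin R, γ' r ^ ((2:ℝ)/N)
        = (lam / 2) * ∑ r : Fin R, (N:ℝ) * γ' r ^ ((2:ℝ)/N) by
          rw [← Finset.mul_sum, ← mul_assoc]; ring]
      apply mul_le_mul_of_nonneg_left _ (by positivity)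
      exact Finset.sum_le_sum (fun r _ => hamgm r)
    linarith
  calc f1 N R I Z Δ lam Rm A = f2 N R I Z Δ lam Rm U γ := heq
    _ ≤ f2 N R I Z Δ lam Rm U' γ' := hmin U' γ' hU'unit hγ'nn
    _ ≤ f1 N R I Z Δ lam Rm A' := hle
end

section
/- Let I, J ≥ 1, let W, Δ ∈ ℝ^{I×J} with Δ taking values in {0,1}, let h ∈ ℝ^J, let T be an I × I diagonal matrix with strictly positive diagonal entries, let λ > 0 and α ∈ [0,1). Define F : ℝ^I → ℝ by F(x) = (1/2)·Σ_{i=1}^I Σ_{j=1}^J Δ(i,j)·(W(i,j) − x_i h_j)² + λ·[((1−α)/2)·xᵀTx + α·Σ_{i=1}^I |x_i|]. Let δ_iᵀ and w_iᵀ denote the i-th rows of Δ and W, and set d_i := ‖h ⊛ δ_i‖₂² + λ(1−α)·T(i,i) and u_i := (h ⊛ δ_i)ᵀ(w_i ⊛ δ_i), where ⊛ is the entrywise product. Then F has a unique global minimizer x*, given componentwise by x*_i = 𝒯_{λα}(u_i)/d_i, where 𝒯_v(t) = sign(t)·max(|t| − v, 0) is the soft-thresholding operator. -/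
open Finset

/-- The soft-thresholding operator `𝒯_v(t) = sign(t)·max(|t| − v, 0)`. -/
noncomputable def softThresh (v t : ℝ) : ℝ := Real.sign t * max (|t| - v) 0

lemma key_ineq (a b c t : ℝ) (ha : 0 < a) (hc : 0 ≤ c) :
    a / 2 * (softThresh c b / a) ^ 2 - b * (softThresh c b / a)
      + c * |softThresh c b / a| + a / 2 * (t - softThresh c b / a) ^ 2
    ≤ a / 2 * t ^ 2 - b * t + c * |t| := by
  set s := softThresh c b / a with hs
  have key : 0 ≤ (a * s - b) * (t - s) + c * (|t| - |s|) := by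
    rcases lt_or_ge c b with hbc | hbc
    · -- c < b
      have hb : 0 < b := lt_of_le_of_lt hc hbc
      have hsb : softThresh c b = b - c := by
        rw [softThresh, Real.sign_of_pos hb, abs_of_pos hb, one_mul,
          max_eq_left (by linarith)]
      have has : a * s = b - c := by
        rw [hs, hsb]; field_simp
      have hs0 : 0 ≤ s := by
        rw [hs, hsb]
        exact div_nonneg (by linarith) ha.le
      have habs : |s| = s := abs_of_nonneg hs0
      have e : (a * s - b) * (t - s) + c * (|t| - |s|) = c * (|t| - t) := by
        rw [habs, has]; ring
      rw [e]
      exact mul_nonneg hc (by linarith [le_abs_self t])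
    · rcases lt_or_ge b (-c) with hbc' | hbc'
      · -- b < -c
        have hb : b < 0 := by linarith
        have hsb : softThresh c b = b + c := by
          rw [softThresh, Real.sign_of_neg hb, abs_of_neg hb,
            max_eq_left (by linarith)]; ring
        have has : a * s = b + c := by
          rw [hs, hsb]; field_simp
        have hs0 : s ≤ 0 := by
          rw [hs, hsb]
          exact div_nonpos_of_nonpos_of_nonneg (by linarith) ha.le
        have habs : |s| = -s := abs_of_nonpos hs0
        have e : (a * s - b) * (t - s) + c * (|t| - |s|) = c * (|t| + t) := by
          rw [habs, has]; ring
        rw [e]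
        exact mul_nonneg hc (by linarith [neg_abs_le t])
      · -- -c ≤ b ≤ c
        have hbb : |b| ≤ c := abs_le.mpr ⟨hbc', hbc⟩
        have hsb : softThresh c b = 0 := by
          rw [softThresh, max_eq_right (by linarith)]; ring
        have hs0 : s = 0 := by rw [hs, hsb, zero_div]
        have e : (a * s - b) * (t - s) + c * (|t| - |s|) = c * |t| - b * t := by
          rw [hs0]; simp; ring
        rw [e]
        have h1 : b * t ≤ c * |t| := by
          calc b * t ≤ |b * t| := le_abs_self _
            _ = |b| * |t| := abs_mul b t
            _ ≤ c * |t| := mul_le_mul_of_nonneg_right hbb (abs_nonneg t)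
        linarith
  nlinarith [key]

/-- The coordinate subproblem
`F(x) = (1/2)Σᵢⱼ Δᵢⱼ(Wᵢⱼ − xᵢhⱼ)² + λ[((1−α)/2)xᵀTx + αΣᵢ|xᵢ|]`
(with `T` diagonal, represented by its diagonal entries) has the unique global minimizer
`x*ᵢ = 𝒯_{λα}(uᵢ)/dᵢ` with `dᵢ = ‖h⊛δᵢ‖₂² + λ(1−α)Tᵢᵢ` and `uᵢ = (h⊛δᵢ)ᵀ(wᵢ⊛δᵢ)`. -/
theorem coordinate_subproblem_minimizer (I J : ℕ) (hI : 1 ≤ I) (hJ : 1 ≤ J)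
    (W Δ : Fin I → Fin J → ℝ) (hΔ : ∀ i j, Δ i j = 0 ∨ Δ i j = 1)
    (h : Fin J → ℝ) (T : Fin I → ℝ) (hT : ∀ i, 0 < T i)
    (lam α : ℝ) (hlam : 0 < lam) (hα : α ∈ Set.Ico (0 : ℝ) 1)
    (F : (Fin I → ℝ) → ℝ)
    (hF : ∀ x, F x = (1 / 2) * ∑ i, ∑ j, Δ i j * (W i j - x i * h j) ^ 2
        + lam * (((1 - α) / 2) * ∑ i, T i * x i ^ 2 + α * ∑ i, |x i|))
    (d u : Fin I → ℝ)
    (hd : ∀ i, d i = (∑ j, (h j * Δ i j) ^ 2) + lam * (1 - α) * T i)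
    (hu : ∀ i, u i = ∑ j, (h j * Δ i j) * (W i j * Δ i j)) :
    (∀ y : Fin I → ℝ, F (fun i => softThresh (lam * α) (u i) / d i) ≤ F y) ∧
    ∀ x : Fin I → ℝ, (∀ y : Fin I → ℝ, F x ≤ F y) →
      ∀ i, x i = softThresh (lam * α) (u i) / d i := by
  have h1α : 0 < 1 - α := by linarith [hα.2]
  have hc : 0 ≤ lam * α := mul_nonneg hlam.le hα.1
  set xs : Fin I → ℝ := fun i => softThresh (lam * α) (u i) / d i with hxs
  have hxsi : ∀ i, xs i = softThresh (lam * α) (u i) / d i := fun _ => rfl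
  have hdpos : ∀ i, 0 < d i := by
    intro i
    rw [hd i]
    have h1 : (0:ℝ) ≤ ∑ j, (h j * Δ i j) ^ 2 :=
      Finset.sum_nonneg fun j _ => sq_nonneg _
    have h2 : 0 < lam * (1 - α) * T i := mul_pos (mul_pos hlam h1α) (hT i)
    linarith
  have hterm : ∀ i (t : ℝ), ∑ j, Δ i j * (W i j - t * h j) ^ 2
      = (∑ j, Δ i j * W i j ^ 2) - 2 * u i * t + (∑ j, (h j * Δ i j) ^ 2) * t ^ 2 := by
    intro i t
    have e1 : ∀ j, Δ i j * (W i j - t * h j) ^ 2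
        = Δ i j * W i j ^ 2 - ((h j * Δ i j) * (W i j * Δ i j)) * (2 * t)
          + (h j * Δ i j) ^ 2 * t ^ 2 := by
      intro j; rcases hΔ i j with h0 | h0 <;> rw [h0] <;> ring
    rw [Finset.sum_congr rfl fun j _ => e1 j, Finset.sum_add_distrib,
      Finset.sum_sub_distrib, ← Finset.sum_mul, ← Finset.sum_mul, ← hu i]
    ring
  have hFdecomp : ∀ x, F x = ∑ i, ((1 / 2) * ∑ j, Δ i j * W i j ^ 2
      + (d i / 2 * (x i) ^ 2 - u i * (x i) + lam * α * |x i|)) := by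
    intro x
    rw [hF x]
    have e2 : lam * (((1 - α) / 2) * ∑ i, T i * x i ^ 2 + α * ∑ i, |x i|)
        = ∑ i, (lam * (1 - α) / 2 * (T i * x i ^ 2) + lam * α * |x i|) := by
      rw [Finset.sum_add_distrib, ← Finset.mul_sum, ← Finset.mul_sum]; ring
    rw [e2, Finset.mul_sum, ← Finset.sum_add_distrib]
    refine Finset.sum_congr rfl fun i _ => ?_
    rw [hterm i (x i), hd i]
    ring
  have hkey : ∀ i (t : ℝ),
      d i / 2 * (xs i) ^ 2 - u i * (xs i) + lam * α * |xs i|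
        + d i / 2 * (t - xs i) ^ 2
      ≤ d i / 2 * t ^ 2 - u i * t + lam * α * |t| := by
    intro i t
    exact key_ineq (d i) (u i) (lam * α) t (hdpos i) hc
  have hmain : ∀ y, F xs + ∑ i, d i / 2 * (y i - xs i) ^ 2 ≤ F y := by
    intro y
    rw [hFdecomp y, hFdecomp xs]
    have hsum : ∑ i, (((1 / 2) * ∑ j, Δ i j * W i j ^ 2
          + (d i / 2 * (xs i) ^ 2 - u i * (xs i) + lam * α * |xs i|))
          + d i / 2 * (y i - xs i) ^ 2)
        ≤ ∑ i, ((1 / 2) * ∑ j, Δ i j * W i j ^ 2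
          + (d i / 2 * (y i) ^ 2 - u i * (y i) + lam * α * |y i|)) := by
      refine Finset.sum_le_sum fun i _ => ?_
      have := hkey i (y i)
      linarith
    rw [Finset.sum_add_distrib] at hsum
    linarith
  constructor
  · intro y
    have h2 := hmain y
    have h3 : (0:ℝ) ≤ ∑ i, d i / 2 * (y i - xs i) ^ 2 :=
      Finset.sum_nonneg fun i _ =>
        mul_nonneg (by linarith [hdpos i]) (sq_nonneg _)
    calc F xs ≤ F xs + ∑ i, d i / 2 * (y i - xs i) ^ 2 := by linarith
      _ ≤ F y := h2
  · intro x hx i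
    have h1 : F x ≤ F xs := hx xs
    have h2 := hmain x
    have h4 : ∀ i ∈ Finset.univ, (0:ℝ) ≤ d i / 2 * (x i - xs i) ^ 2 :=
      fun i _ => mul_nonneg (by linarith [hdpos i]) (sq_nonneg _)
    have h5 : ∑ i, d i / 2 * (x i - xs i) ^ 2 = 0 :=
      le_antisymm (by linarith) (Finset.sum_nonneg h4)
    have h6 := (Finset.sum_eq_zero_iff_of_nonneg h4).mp h5 i (Finset.mem_univ i)
    have h7 : (x i - xs i) ^ 2 = 0 := by
      rcases mul_eq_zero.mp h6 with h' | h'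
      · exact absurd h' (by have := hdpos i; positivity)
      · exact h'
    have h8 : x i = xs i := by
      have := pow_eq_zero_iff (n := 2) (by norm_num) |>.mp h7
      linarith [sub_eq_zero.mp this]
    rw [h8]
end

section
/- Let (Ω, 𝒫) be a probability space and let A_1 : Ω → ℝ^{I_1×R}, A_2 : Ω → ℝ^{I_2×R}, A_3 : Ω → ℝ^{I_3×R} be random matrices such that the 3R columns {a_r^(n) : n ∈ {1,2,3}, r ∈ Fin R} are mutually independent, each column a_r^(n) is zero mean with square-integrable entries, and E[a_r^(n)(i)·a_r^(n)(j)] = R_n(i,j) for covariance matrices R_n with θ_n := Tr(R_n). Define the random 3-way tensor X by X(i_1,i_2,i_3) = Σ_{r=1}^R A_1(i_1,r)·A_2(i_2,r)·A_3(i_3,r). Then for all i, j ∈ Fin I_1: E[Σ_{i_2,i_3} X(i,i_2,i_3)·X(j,i_2,i_3)] = R·θ_2·θ_3·R_1(i,j). -/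
/-!
Expanding both slices, the integrand is a sum over pairs of ranks `(r, s)` of products of
entries of the columns `a_r^(n)` and `a_s^(n)`. For `r ≠ s` these are `2 · (#modes)` entries of
distinct, hence independent, columns, so the expectation factors completely and vanishes because
the columns are centred. For `r = s` it factors over the modes into covariances
`R_1(i, j) · R_2(i₂, i₂) · R_3(i₃, i₃)`; summing over `r`, `i₂`, `i₃` gives
`R · θ₂ · θ₃ · R_1(i, j)`.
-/

open MeasureTheory ProbabilityTheory

namespace ProbabilityTheory

variable {Ω ι : Type*} [MeasurableSpace Ω] {μ : Measure Ω}

theorem iIndepFun.integrable_fun_prod [Fintype ι] {X : ι → Ω → ℝ} (hX : iIndepFun X μ)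
    (hX_int : ∀ i, Integrable (X i) μ) : Integrable (fun ω ↦ ∏ i, X i ω) μ := by
  have := hX.isProbabilityMeasure
  have mX : ∀ i, AEMeasurable (X i) μ := fun i ↦ (hX_int i).aemeasurable
  change Integrable ((fun x : ι → ℝ ↦ ∏ i, x i) ∘ fun ω i ↦ X i ω) μ
  rw [← integrable_map_measure (by fun_prop) (aemeasurable_pi_lambda _ mX),
    hX.map_fun_eq_pi_map mX]
  exact Integrable.fintype_prod_dep fun i ↦
    (integrable_map_measure aestronglyMeasurable_id (mX i)).2 (hX_int i)

end ProbabilityTheory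

namespace Parafac

variable {Ω ι κ : Type*} {d : ι → Type*} {A : ∀ n, Ω → d n → κ → ℝ}

def entry [Fintype ι] [Fintype κ] (A : ∀ n, Ω → d n → κ → ℝ) (a : ∀ n, d n) (ω : Ω) : ℝ :=
  ∑ r, ∏ n, A n ω (a n) r

theorem prod_mul_eq_prod_bool [Fintype ι] (ω : Ω) (r s : κ) (a b : ∀ n, d n) :
    ∏ n, A n ω (a n) r * A n ω (b n) s =
      ∏ q : ι × Bool, A q.1 ω (cond q.2 (a q.1) (b q.1)) (cond q.2 r s) := by
  simp only [Fintype.prod_prod_type, Fintype.prod_bool, cond_true, cond_false]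

theorem entry_mul_entry [Fintype ι] [Fintype κ] (a b : ∀ n, d n) (ω : Ω) :
    entry A a ω * entry A b ω = ∑ r, ∑ s, ∏ n, A n ω (a n) r * A n ω (b n) s := by
  simp only [entry, Finset.sum_mul_sum, Finset.prod_mul_distrib]

variable [MeasurableSpace Ω] {μ : Measure Ω}

theorem iIndepFun_factor_entries_of_ne
    (hindep : iIndepFun (fun (p : ι × κ) ω i ↦ A p.1 ω i p.2) μ)
    {r s : κ} (hrs : r ≠ s) (a b : ∀ n, d n) :
    iIndepFun (fun (q : ι × Bool) ω ↦ A q.1 ω (cond q.2 (a q.1) (b q.1)) (cond q.2 r s)) μ := by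
  have hinj : Function.Injective fun q : ι × Bool ↦ (q.1, cond q.2 r s) := by
    rintro ⟨n, k⟩ ⟨n', k'⟩ h
    simp only [Prod.mk.injEq] at h
    cases k <;> cases k' <;> simp_all [eq_comm]
  exact (hindep.precomp hinj).comp (fun q v ↦ v (cond q.2 (a q.1) (b q.1)))
    fun _ ↦ measurable_pi_apply _

theorem iIndepFun_factor_entry_mul_self
    (hindep : iIndepFun (fun (p : ι × κ) ω i ↦ A p.1 ω i p.2) μ)
    (r : κ) (a b : ∀ n, d n) :
    iIndepFun (fun n ω ↦ A n ω (a n) r * A n ω (b n) r) μ :=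
  (hindep.precomp (Prod.mk_left_injective r)).comp (fun n v ↦ v (a n) * v (b n))
    fun _ ↦ (measurable_pi_apply _).mul (measurable_pi_apply _)

theorem integral_prod_mul_of_ne [Fintype ι] [Nonempty ι]
    (hindep : iIndepFun (fun (p : ι × κ) ω i ↦ A p.1 ω i p.2) μ)
    (hmeas : ∀ n i r, AEStronglyMeasurable (fun ω ↦ A n ω i r) μ)
    (hmean : ∀ n i r, ∫ ω, A n ω i r ∂μ = 0) {r s : κ} (hrs : r ≠ s) (a b : ∀ n, d n) :
    ∫ ω, ∏ n, A n ω (a n) r * A n ω (b n) s ∂μ = 0 := by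
  simp only [prod_mul_eq_prod_bool]
  rw [(iIndepFun_factor_entries_of_ne hindep hrs a b).integral_fun_prod_eq_prod_integral
    fun _ ↦ hmeas _ _ _]
  exact Finset.prod_eq_zero (i := (Classical.arbitrary ι, true)) (Finset.mem_univ _) (hmean _ _ _)

theorem integral_prod_mul_self [Fintype ι]
    (hindep : iIndepFun (fun (p : ι × κ) ω i ↦ A p.1 ω i p.2) μ)
    (hmeas : ∀ n i r, AEStronglyMeasurable (fun ω ↦ A n ω i r) μ) (r : κ) (a b : ∀ n, d n) :
    ∫ ω, ∏ n, A n ω (a n) r * A n ω (b n) r ∂μ = ∏ n, ∫ ω, A n ω (a n) r * A n ω (b n) r ∂μ :=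
  (iIndepFun_factor_entry_mul_self hindep r a b).integral_fun_prod_eq_prod_integral
    fun _ ↦ (hmeas _ _ _).mul (hmeas _ _ _)

theorem integrable_prod_mul [Fintype ι]
    (hindep : iIndepFun (fun (p : ι × κ) ω i ↦ A p.1 ω i p.2) μ)
    (hL2 : ∀ n i r, MemLp (fun ω ↦ A n ω i r) 2 μ)
    (r s : κ) (a b : ∀ n, d n) :
    Integrable (fun ω ↦ ∏ n, A n ω (a n) r * A n ω (b n) s) μ := by
  have := hindep.isProbabilityMeasure
  obtain rfl | hrs := eq_or_ne r s
  · exact (iIndepFun_factor_entry_mul_self hindep r a b).integrable_fun_prod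
      fun _ ↦ (hL2 _ _ _).integrable_mul (hL2 _ _ _)
  · simp only [prod_mul_eq_prod_bool]
    exact (iIndepFun_factor_entries_of_ne hindep hrs a b).integrable_fun_prod
      fun _ ↦ (hL2 _ _ _).integrable one_le_two

theorem integrable_entry_mul_entry [Fintype ι] [Fintype κ]
    (hindep : iIndepFun (fun (p : ι × κ) ω i ↦ A p.1 ω i p.2) μ)
    (hL2 : ∀ n i r, MemLp (fun ω ↦ A n ω i r) 2 μ) (a b : ∀ n, d n) :
    Integrable (fun ω ↦ entry A a ω * entry A b ω) μ := by
  simp only [entry_mul_entry]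
  exact integrable_finsetSum _ fun r _ ↦ integrable_finsetSum _ fun s _ ↦
    integrable_prod_mul hindep hL2 r s a b

theorem integral_entry_mul_entry [Fintype ι] [Nonempty ι] [Fintype κ]
    (hindep : iIndepFun (fun (p : ι × κ) ω i ↦ A p.1 ω i p.2) μ)
    (hL2 : ∀ n i r, MemLp (fun ω ↦ A n ω i r) 2 μ)
    (hmean : ∀ n i r, ∫ ω, A n ω i r ∂μ = 0) (a b : ∀ n, d n) :
    ∫ ω, entry A a ω * entry A b ω ∂μ = ∑ r, ∏ n, ∫ ω, A n ω (a n) r * A n ω (b n) r ∂μ := by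
  have hmeas : ∀ n i r, AEStronglyMeasurable (fun ω ↦ A n ω i r) μ :=
    fun n i r ↦ (hL2 n i r).aestronglyMeasurable
  simp only [entry_mul_entry]
  rw [integral_finsetSum _ fun r _ ↦ integrable_finsetSum _ fun s _ ↦
    integrable_prod_mul hindep hL2 r s a b]
  refine Finset.sum_congr rfl fun r _ ↦ ?_
  rw [integral_finsetSum _ fun s _ ↦ integrable_prod_mul hindep hL2 r s a b,
    Finset.sum_eq_single r
      (fun s _ hsr ↦ integral_prod_mul_of_ne hindep hmeas hmean (Ne.symm hsr) a b)
      (by simp)]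
  exact integral_prod_mul_self hindep hmeas r a b

end Parafac

theorem kernel_similarity_mode_one_general (R : ℕ)
    (I : Fin 3 → ℕ)
    {Ω : Type*} [MeasurableSpace Ω] (μ : Measure Ω)
    (A : ∀ n : Fin 3, Ω → Fin (I n) → Fin R → ℝ)
    (hindep : iIndepFun
      (m := fun p : Fin 3 × Fin R => (inferInstance : MeasurableSpace (Fin (I p.1) → ℝ)))
      (fun p ω i => A p.1 ω i p.2) μ)
    (hL2 : ∀ n i r, MemLp (fun ω => A n ω i r) 2 μ)
    (hmean : ∀ n i r, ∫ ω, A n ω i r ∂μ = 0)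
    (Rn : ∀ n : Fin 3, Fin (I n) → Fin (I n) → ℝ)
    (hcov : ∀ n r i j, ∫ ω, A n ω i r * A n ω j r ∂μ = Rn n i j)
    (θ : Fin 3 → ℝ) (hθ : ∀ n, θ n = ∑ i : Fin (I n), Rn n i i)
    (X : Ω → Fin (I 0) → Fin (I 1) → Fin (I 2) → ℝ)
    (hX : ∀ ω i1 i2 i3,
      X ω i1 i2 i3 = ∑ r : Fin R, A 0 ω i1 r * A 1 ω i2 r * A 2 ω i3 r) :
    ∀ i j : Fin (I 0),
      ∫ ω, (∑ i2 : Fin (I 1), ∑ i3 : Fin (I 2), X ω i i2 i3 * X ω j i2 i3) ∂μ =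
        (R : ℝ) * θ 1 * θ 2 * Rn 0 i j := by
  intro i j
  let idx : Fin (I 0) → Fin (I 1) → Fin (I 2) → ∀ n, Fin (I n) :=
    fun i1 i2 i3 ↦ Fin.cons i1 (Fin.cons i2 (Fin.cons i3 finZeroElim))
  have hX_entry : ∀ i1 i2 i3 ω, X ω i1 i2 i3 = Parafac.entry A (idx i1 i2 i3) ω := by
    intro i1 i2 i3 ω
    simp only [hX, Parafac.entry, Fin.prod_univ_three]
    rfl
  have hmoment : ∀ i2 i3, ∫ ω, X ω i i2 i3 * X ω j i2 i3 ∂μ =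
      R * (Rn 0 i j * Rn 1 i2 i2 * Rn 2 i3 i3) := by
    intro i2 i3
    simp only [hX_entry, Parafac.integral_entry_mul_entry hindep hL2 hmean, Fin.prod_univ_three,
      hcov, Finset.sum_const, Finset.card_univ, Fintype.card_fin, nsmul_eq_mul]
    rfl
  have hint : ∀ i2 i3, Integrable (fun ω ↦ X ω i i2 i3 * X ω j i2 i3) μ := by
    intro i2 i3
    simp only [hX_entry]
    exact Parafac.integrable_entry_mul_entry hindep hL2 _ _
  rw [integral_finsetSum _ fun i2 _ ↦ integrable_finsetSum _ fun i3 _ ↦ hint i2 i3]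
  simp only [integral_finsetSum _ fun i3 _ ↦ hint _ i3, hmoment, hθ, Finset.mul_sum,
    Finset.sum_mul]
  rw [Finset.sum_comm]
  exact Finset.sum_congr rfl fun i2 _ ↦ Finset.sum_congr rfl fun i3 _ ↦ by ring

/-- Kernel similarity matrix of a random 3-way PARAFAC tensor with mutually independent
zero-mean columns: `E[⟨mode-1 slice i, mode-1 slice j⟩] = R·θ₂·θ₃·R₁(i,j)`. -/
theorem kernel_similarity_mode_one (R : ℕ) (hR : 1 ≤ R)
    (I : Fin 3 → ℕ) (hI : ∀ n, 1 ≤ I n)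
    {Ω : Type*} [MeasurableSpace Ω] (μ : Measure Ω) [IsProbabilityMeasure μ]
    (A : ∀ n : Fin 3, Ω → Fin (I n) → Fin R → ℝ)
    (hindep : iIndepFun
      (m := fun p : Fin 3 × Fin R => (inferInstance : MeasurableSpace (Fin (I p.1) → ℝ)))
      (fun p ω i => A p.1 ω i p.2) μ)
    (hL2 : ∀ n i r, MemLp (fun ω => A n ω i r) 2 μ)
    (hmean : ∀ n i r, ∫ ω, A n ω i r ∂μ = 0)
    (Rn : ∀ n : Fin 3, Fin (I n) → Fin (I n) → ℝ)
    (hcov : ∀ n r i j, ∫ ω, A n ω i r * A n ω j r ∂μ = Rn n i j)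
    (θ : Fin 3 → ℝ) (hθ : ∀ n, θ n = ∑ i : Fin (I n), Rn n i i)
    (X : Ω → Fin (I 0) → Fin (I 1) → Fin (I 2) → ℝ)
    (hX : ∀ ω i1 i2 i3,
      X ω i1 i2 i3 = ∑ r : Fin R, A 0 ω i1 r * A 1 ω i2 r * A 2 ω i3 r) :
    ∀ i j : Fin (I 0),
      ∫ ω, (∑ i2 : Fin (I 1), ∑ i3 : Fin (I 2), X ω i i2 i3 * X ω j i2 i3) ∂μ =
        (R : ℝ) * θ 1 * θ 2 * Rn 0 i j :=
  kernel_similarity_mode_one_general R I μ A hindep hL2 hmean Rn hcov θ hθ X hX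
end

section
/- Let (Ω, 𝒫) be a probability space and let A_1 : Ω → ℝ^{I_1×R}, A_2 : Ω → ℝ^{I_2×R}, A_3 : Ω → ℝ^{I_3×R} be random matrices such that the 3R columns {a_r^(n) : n ∈ {1,2,3}, r ∈ Fin R} are mutually independent, each column a_r^(n) is zero mean with square-integrable entries, and E[a_r^(n)(i)·a_r^(n)(j)] = R_n(i,j) for covariance matrices R_n with θ_n := Tr(R_n). Define the random 3-way tensor X by X(i_1,i_2,i_3) = Σ_{r=1}^R A_1(i_1,r)·A_2(i_2,r)·A_3(i_3,r). Then the expected squared Frobenius norm satisfies E[Σ_{i_1,i_2,i_3} X(i_1,i_2,i_3)²] = R·θ_1·θ_2·θ_3. -/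
open MeasureTheory ProbabilityTheory Finset

/-!
Fix an entry `(i₁, i₂, i₃)` and write `Y_r = A₁(i₁,r) A₂(i₂,r) A₃(i₃,r)`, so that
`X(i₁,i₂,i₃) = ∑_r Y_r`. For `r ≠ s` the six factors of `Y_r Y_s` are independent and
mean zero, so `E[Y_r Y_s] = 0`; for `r = s` independence of the three columns gives
`E[Y_r²] = R₁(i₁,i₁) R₂(i₂,i₂) R₃(i₃,i₃)`. Hence `E[X(i₁,i₂,i₃)²] = R ∏ₙ Rₙ(iₙ,iₙ)`, and
summing over the entries factors into `R θ₁ θ₂ θ₃`.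
-/

namespace ProbabilityTheory

variable {Ω : Type*} [MeasurableSpace Ω] {μ : Measure Ω}

lemma iIndepFun.integrable_finsetProd {ι : Type*} {f : ι → Ω → ℝ} (h : iIndepFun f μ)
    (hf : ∀ i, Integrable (f i) μ) (s : Finset ι) :
    Integrable (fun ω => ∏ i ∈ s, f i ω) μ := by
  classical
  have := h.isProbabilityMeasure
  induction s using Finset.induction_on with
  | empty => simp
  | insert i s hi ih =>
    have hind := h.indepFun_finsetProd_of_notMem₀ (fun j => (hf j).aemeasurable) hi
    refine (hind.integrable_mul ?_ (hf i)).congr (.of_forall fun ω => ?_)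
    · simpa only [← prod_apply] using ih
    · simp [prod_insert hi, mul_comm]

section Slices

variable {κ ι : Type*} {Z : κ × ι → Ω → ℝ}

lemma iIndepFun.slice (hZ : iIndepFun Z μ) (r : ι) : iIndepFun (fun n => Z (n, r)) μ :=
  hZ.precomp fun _ _ h => (Prod.mk.inj h).1

variable [Fintype κ]

lemma iIndepFun.integral_prod_slice_sq (hZ : iIndepFun Z μ)
    (hZm : ∀ p, AEStronglyMeasurable (Z p) μ) (r : ι) :
    ∫ ω, (∏ n, Z (n, r) ω) ^ 2 ∂μ = ∏ n, ∫ ω, Z (n, r) ω ^ 2 ∂μ := by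
  simp_rw [← prod_pow]
  exact ((hZ.slice r).comp (fun _ x => x ^ 2) fun _ => measurable_id.pow_const 2)
    |>.integral_fun_prod_eq_prod_integral fun n => (hZm (n, r)).pow 2

lemma iIndepFun.memLp_two_prod_slice (hZ : iIndepFun Z μ) (hL2 : ∀ p, MemLp (Z p) 2 μ)
    (r : ι) : MemLp (fun ω => ∏ n, Z (n, r) ω) 2 μ := by
  refine (memLp_two_iff_integrable_sq
    (Finset.aestronglyMeasurable_fun_prod _ fun n _ => (hL2 (n, r)).1)).2 ?_
  simp_rw [← prod_pow]
  simpa using ((hZ.slice r).comp (fun _ x => x ^ 2) fun _ => measurable_id.pow_const 2)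
    |>.integrable_finsetProd (fun n => (hL2 (n, r)).integrable_sq) univ

lemma iIndepFun.integral_prod_slice_mul_prod_slice_of_ne [Nonempty κ] (hZ : iIndepFun Z μ)
    (hZm : ∀ p, AEStronglyMeasurable (Z p) μ) (hmean : ∀ p, μ[Z p] = 0) {r s : ι}
    (hrs : r ≠ s) : ∫ ω, (∏ n, Z (n, r) ω) * ∏ n, Z (n, s) ω ∂μ = 0 := by
  have hinj : (Sum.elim (·, r) (·, s) : κ ⊕ κ → κ × ι).Injective := by
    rintro (a | a) (b | b) h <;> simp_all [eq_comm]
  have := (hZ.precomp hinj).integral_fun_prod_eq_prod_integral fun _ => hZm _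
  obtain ⟨n⟩ := ‹Nonempty κ›
  simpa [Fintype.prod_sum_type, hmean] using this

lemma iIndepFun.integral_sq_sum_prod_slice [Nonempty κ] [Fintype ι] (hZ : iIndepFun Z μ)
    (hL2 : ∀ p, MemLp (Z p) 2 μ) (hmean : ∀ p, μ[Z p] = 0) :
    ∫ ω, (∑ r, ∏ n, Z (n, r) ω) ^ 2 ∂μ = ∑ r, ∏ n, ∫ ω, Z (n, r) ω ^ 2 ∂μ := by
  classical
  have hZm p := (hL2 p).1
  have hcross r s : ∫ ω, (∏ n, Z (n, r) ω) * ∏ n, Z (n, s) ω ∂μ =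
      if r = s then ∏ n, ∫ ω, Z (n, r) ω ^ 2 ∂μ else 0 := by
    split_ifs with hrs
    · simpa only [hrs, sq] using hZ.integral_prod_slice_sq hZm s
    · exact hZ.integral_prod_slice_mul_prod_slice_of_ne hZm hmean hrs
  have hint r s : Integrable (fun ω => (∏ n, Z (n, r) ω) * ∏ n, Z (n, s) ω) μ :=
    (hZ.memLp_two_prod_slice hL2 r).integrable_mul (hZ.memLp_two_prod_slice hL2 s)
  calc ∫ ω, (∑ r, ∏ n, Z (n, r) ω) ^ 2 ∂μ
      = ∑ r, ∑ s, ∫ ω, (∏ n, Z (n, r) ω) * ∏ n, Z (n, s) ω ∂μ := by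
        simp_rw [sq, sum_mul_sum]
        rw [integral_finsetSum _ fun r _ => integrable_finsetSum _ fun s _ => hint r s]
        simp_rw [integral_finsetSum _ fun s _ => hint _ s]
    _ = ∑ r, ∏ n, ∫ ω, Z (n, r) ω ^ 2 ∂μ := by
        simp_rw [hcross, sum_ite_eq, if_pos (mem_univ _)]

end Slices

end ProbabilityTheory

theorem expected_frobenius_norm_sq_general (R : ℕ)
    (I : Fin 3 → ℕ)
    {Ω : Type*} [MeasurableSpace Ω] (μ : Measure Ω)
    (A : ∀ n : Fin 3, Ω → Fin (I n) → Fin R → ℝ)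
    (hindep : iIndepFun
      (m := fun p : Fin 3 × Fin R => (inferInstance : MeasurableSpace (Fin (I p.1) → ℝ)))
      (fun p ω i => A p.1 ω i p.2) μ)
    (hL2 : ∀ n i r, MemLp (fun ω => A n ω i r) 2 μ)
    (hmean : ∀ n i r, ∫ ω, A n ω i r ∂μ = 0)
    (Rn : ∀ n : Fin 3, Fin (I n) → Fin (I n) → ℝ)
    (hcov : ∀ n r i j, ∫ ω, A n ω i r * A n ω j r ∂μ = Rn n i j)
    (θ : Fin 3 → ℝ) (hθ : ∀ n, θ n = ∑ i : Fin (I n), Rn n i i)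
    (X : Ω → Fin (I 0) → Fin (I 1) → Fin (I 2) → ℝ)
    (hX : ∀ ω i1 i2 i3,
      X ω i1 i2 i3 = ∑ r : Fin R, A 0 ω i1 r * A 1 ω i2 r * A 2 ω i3 r) :
    ∫ ω, (∑ i1 : Fin (I 0), ∑ i2 : Fin (I 1), ∑ i3 : Fin (I 2), X ω i1 i2 i3 ^ 2) ∂μ =
      (R : ℝ) * θ 0 * θ 1 * θ 2 := by
  have entry i1 i2 i3 : MemLp (fun ω => X ω i1 i2 i3) 2 μ ∧
      ∫ ω, X ω i1 i2 i3 ^ 2 ∂μ = R * Rn 0 i1 i1 * Rn 1 i2 i2 * Rn 2 i3 i3 := by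
    let idx : ∀ n, Fin (I n) := Fin.cons i1 (Fin.cons i2 (Fin.cons i3 fun i => i.elim0))
    have hZ : iIndepFun (fun (p : Fin 3 × Fin R) ω => A p.1 ω (idx p.1) p.2) μ :=
      hindep.comp (fun p v => v (idx p.1)) fun _ => measurable_pi_apply _
    have hZL2 (p : Fin 3 × Fin R) : MemLp (fun ω => A p.1 ω (idx p.1) p.2) 2 μ := hL2 _ _ _
    have hXZ ω : X ω i1 i2 i3 = ∑ r, ∏ n, A n ω (idx n) r := by
      rw [hX]; exact sum_congr rfl fun r _ => (Fin.prod_univ_three fun n => A n ω (idx n) r).symm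
    simp_rw [hXZ]
    refine ⟨memLp_finsetSum _ fun r _ => hZ.memLp_two_prod_slice hZL2 r, ?_⟩
    rw [hZ.integral_sq_sum_prod_slice hZL2 fun _ => hmean _ _ _]
    simp only [sq, hcov, Fin.prod_univ_three, sum_const, card_univ, Fintype.card_fin,
      nsmul_eq_mul, mul_assoc]
    rfl
  have hint i1 i2 i3 := (entry i1 i2 i3).1.integrable_sq
  calc ∫ ω, (∑ i1, ∑ i2, ∑ i3, X ω i1 i2 i3 ^ 2) ∂μ
      = ∑ i1, ∑ i2, ∑ i3, ∫ ω, X ω i1 i2 i3 ^ 2 ∂μ := by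
        rw [integral_finsetSum _ fun i1 _ => integrable_finsetSum _ fun i2 _ =>
          integrable_finsetSum _ fun i3 _ => hint i1 i2 i3]
        simp_rw [integral_finsetSum _ fun i2 _ => integrable_finsetSum _ fun i3 _ => hint _ i2 i3,
          integral_finsetSum _ fun i3 _ => hint _ _ i3]
    _ = ∑ i1, ∑ i2, ∑ i3, (R : ℝ) * Rn 0 i1 i1 * Rn 1 i2 i2 * Rn 2 i3 i3 := by
        simp only [(entry _ _ _).2]
    _ = R * θ 0 * θ 1 * θ 2 := by
        simp only [hθ, ← mul_sum, ← sum_mul]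

/-- Expected squared Frobenius norm of a random 3-way PARAFAC tensor with mutually
independent zero-mean columns: `E‖X‖_F² = R·θ₁·θ₂·θ₃`. -/
theorem expected_frobenius_norm_sq (R : ℕ) (hR : 1 ≤ R)
    (I : Fin 3 → ℕ) (hI : ∀ n, 1 ≤ I n)
    {Ω : Type*} [MeasurableSpace Ω] (μ : Measure Ω) [IsProbabilityMeasure μ]
    (A : ∀ n : Fin 3, Ω → Fin (I n) → Fin R → ℝ)
    (hindep : iIndepFun
      (m := fun p : Fin 3 × Fin R => (inferInstance : MeasurableSpace (Fin (I p.1) → ℝ)))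
      (fun p ω i => A p.1 ω i p.2) μ)
    (hL2 : ∀ n i r, MemLp (fun ω => A n ω i r) 2 μ)
    (hmean : ∀ n i r, ∫ ω, A n ω i r ∂μ = 0)
    (Rn : ∀ n : Fin 3, Fin (I n) → Fin (I n) → ℝ)
    (hcov : ∀ n r i j, ∫ ω, A n ω i r * A n ω j r ∂μ = Rn n i j)
    (θ : Fin 3 → ℝ) (hθ : ∀ n, θ n = ∑ i : Fin (I n), Rn n i i)
    (X : Ω → Fin (I 0) → Fin (I 1) → Fin (I 2) → ℝ)
    (hX : ∀ ω i1 i2 i3,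
      X ω i1 i2 i3 = ∑ r : Fin R, A 0 ω i1 r * A 1 ω i2 r * A 2 ω i3 r) :
    ∫ ω, (∑ i1 : Fin (I 0), ∑ i2 : Fin (I 1), ∑ i3 : Fin (I 2), X ω i1 i2 i3 ^ 2) ∂μ =
      (R : ℝ) * θ 0 * θ 1 * θ 2 :=
  expected_frobenius_norm_sq_general R I μ A hindep hL2 hmean Rn hcov θ hθ X hX
end
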